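/- arXiv:2207.08214 — 4 statements merged into one kernel-verified Lean document; each statement's English description precedes it below -/
import Mathlib

section
/- Let Φ be the 24×24 block matrix diag(Φ_I, I_9) where Φ_I is a 15×15 matrix, and let N = (0, 0, 0, 0, I_3, I_3, I_3, I_3)^T ∈ R^{24×3} (blocks of size 3). If the ranging measurement Jacobian H_u at any time has block rows of the form [Γ₁, Γ₂, Γ₃, Γ₄, −ζ, 0, ζ, 0], [Γ₁', Γ₂', Γ₃', Γ₄', −ζ', 0, 0, ζ'], and [0,0,0,0,0,0, Λ, −Λ] for row vectors ζ, ζ', Λ ∈ R^{1×3}, then H_u Φ N = 0. -/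
/-!
Block-wise, `(H Φ) N = H (Φ N)`. The translation directions are fixed by `Φ`: every block column
of `Φ` on which `N` is nonzero is a unit column, since `Φ_I` has translation column `(0,0,0,0,I₃)ᵀ`
and the remaining states propagate by the identity. Hence `H Φ N = H N`, which is the sum of the
last four blocks of the row, and these cancel in each of the three ranging rows.
-/

open Matrix

section BlockProducts

variable {ι n R : Type*} [Fintype ι] [Fintype n] [NonUnitalSemiring R]

theorem sum_vecMul_sum_vecMul (r : ι → n → R) (Φ : ι → ι → Matrix n n R)
    (N : ι → Matrix n n R) :
    ∑ b, (∑ a, r a ᵥ* Φ a b) ᵥ* N b = ∑ a, r a ᵥ* ∑ b, Φ a b * N b := by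
  simp only [sum_vecMul, vecMul_sum, vecMul_vecMul]
  exact Finset.sum_comm

theorem sum_mul_eq_of_unit_columns [DecidableEq ι] {A : Type*} [Semiring A]
    {Φ : ι → ι → A} {N : ι → A}
    (hΦ : ∀ a b, N b ≠ 0 → Φ a b = if a = b then 1 else 0) (a : ι) :
    ∑ b, Φ a b * N b = N a := by
  calc ∑ b, Φ a b * N b = ∑ b, (if a = b then 1 else 0) * N b := by
        refine Finset.sum_congr rfl fun b _ => ?_
        by_cases hb : N b = 0
        · simp [hb]
        · rw [hΦ a b hb]
    _ = N a := by simp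

end BlockProducts

/-- Let `Φ = diag(Φ_I, I₉)` (in 3×3 blocks, `Φ_I` being the 15×15 IMU block whose
translation block column is `(0,0,0,0,I₃)ᵀ`), and `N = (0,0,0,0,I₃,I₃,I₃,I₃)ᵀ`.
If the ranging Jacobian `H_u` has block rows `[Γ₁,Γ₂,Γ₃,Γ₄,−ζ,0,ζ,0]`,
`[Γ₁',Γ₂',Γ₃',Γ₄',−ζ',0,0,ζ']` and `[0,0,0,0,0,0,Λ,−Λ]`, then `H_u Φ N = 0`. -/
theorem stmt7
    (Φblk : Fin 5 → Fin 5 → Matrix (Fin 3) (Fin 3) ℝ)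
    (hcol : ∀ a : Fin 5, Φblk a 4 = if a = 4 then 1 else 0)
    (Γ Γ' : Fin 4 → (Fin 3 → ℝ)) (ζ ζ' Λ : Fin 3 → ℝ) :
    -- the 24×24 block transition matrix Φ = diag(Φ_I, I₉)
    let Φ : Fin 8 → Fin 8 → Matrix (Fin 3) (Fin 3) ℝ := fun a b =>
      if ha : (a : ℕ) < 5 then
        (if hb : (b : ℕ) < 5 then Φblk ⟨a, ha⟩ ⟨b, hb⟩ else 0)
      else (if a = b then 1 else 0)
    -- the translation null-space directions N = (0,0,0,0,I,I,I,I)ᵀ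
    let N : Fin 8 → Matrix (Fin 3) (Fin 3) ℝ := fun b => if 4 ≤ (b : ℕ) then 1 else 0
    -- the three block rows of H_u
    let row1 : Fin 8 → (Fin 3 → ℝ) := ![Γ 0, Γ 1, Γ 2, Γ 3, -ζ, 0, ζ, 0]
    let row2 : Fin 8 → (Fin 3 → ℝ) := ![Γ' 0, Γ' 1, Γ' 2, Γ' 3, -ζ', 0, 0, ζ']
    let row3 : Fin 8 → (Fin 3 → ℝ) := ![0, 0, 0, 0, 0, 0, Λ, -Λ]
    -- block product (row · Φ) · N
    let prod : (Fin 8 → (Fin 3 → ℝ)) → (Fin 3 → ℝ) := fun r =>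
      ∑ b : Fin 8, ((∑ a : Fin 8, (r a) ᵥ* (Φ a b)) ᵥ* (N b))
    prod row1 = 0 ∧ prod row2 = 0 ∧ prod row3 = 0 := by
  intro Φ N row1 row2 row3 prod
  have hunit : ∀ a b, N b ≠ 0 → Φ a b = if a = b then 1 else 0 := by
    intro a b hb
    have h4 : 4 ≤ (b : ℕ) := by
      by_contra h
      simp [N, h] at hb
    fin_cases a <;> fin_cases b <;> simp_all [Φ]
  have hrow : ∀ r, prod r = r 4 + r 5 + r 6 + r 7 := by
    intro r
    change ∑ b, (∑ a, r a ᵥ* Φ a b) ᵥ* N b = _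
    rw [sum_vecMul_sum_vecMul]
    simp only [sum_mul_eq_of_unit_columns hunit]
    simp [Fin.sum_univ_eight, N]
  refine ⟨?_, ?_, ?_⟩ <;> simp [hrow, row1, row2, row3]
end

section
/- Let the ideal VIRO null space N₂ = (R₁ g, 0, −⌊v₁×⌋g, 0, −⌊p₁×⌋g, −⌊p_f×⌋g, −⌊p_{a1}×⌋g, −⌊p_{a2}×⌋g) with blocks in R^3, where R₁ ∈ SO(3). Suppose the IMU state transition satisfies Φ₅₁ R₁ g = ⌊p₁ + (k−1)δ v₁ − ((k−1)δ)²/2 g − p_k ×⌋ g, Φ₅₂-terms vanish on 0, Φ₅₃ = (k−1)δ I. Then the ranging block row [ζ·R_k^T⌊q×⌋Φ₁₁, ζ·R_k^T⌊q×⌋Φ₁₂ − ζΦ₅₂ , −ζΦ₅₃, −ζΦ₅₄, −ζ, 0, ζ, 0] applied to N₂ evaluates to ζ ⌊(R_k^T q + p_k − p_{a1})×⌋ g, which is zero when ζ = −2(R_k^T q + p_k − p_{a1})^T. -/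
/-!
After the state-transition identities are substituted, the body-offset term reduces to
`ζ ⬝ (R_kᵀ q ⨯ g)` because the cross product is equivariant under rotations, the
gravity term `((k−1)δ)²/2 · g ⨯ g` vanishes, and the velocity and initial-position terms
cancel, leaving `ζ ⬝ ((R_kᵀ q + p_k − p_{a1}) ⨯ g)`. For `ζ` a multiple of the first factor
this triple product is zero.
-/

open Matrix

theorem Matrix.transpose_mulVec_cross_mulVec {R : Type*} [CommRing R]
    (A : Matrix (Fin 3) (Fin 3) R) (a b : Fin 3 → R) :
    Aᵀ *ᵥ ((A *ᵥ a) ⨯₃ (A *ᵥ b)) = A.det • (a ⨯₃ b) := by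
  ext i
  fin_cases i <;>
    simp [cross_apply, mulVec, dotProduct, Fin.sum_univ_three, det_fin_three] <;> ring

theorem Matrix.transpose_mulVec_cross_mulVec_of_mem_specialOrthogonalGroup {R : Type*}
    [CommRing R] {A : Matrix (Fin 3) (Fin 3) R}
    (hA : A ∈ specialOrthogonalGroup (Fin 3) R) (a b : Fin 3 → R) :
    Aᵀ *ᵥ (a ⨯₃ (A *ᵥ b)) = (Aᵀ *ᵥ a) ⨯₃ b := by
  obtain ⟨hA_orth, hA_det⟩ := mem_specialOrthogonalGroup_iff.mp hA
  have hA_inv : A * Aᵀ = 1 := (mem_orthogonalGroup_iff _ _).mp hA_orth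
  conv_lhs => rw [← one_mulVec a, ← hA_inv, ← mulVec_mulVec]
  rw [transpose_mulVec_cross_mulVec, hA_det, one_smul]

theorem stmt14_general
    (R1 Rk : Matrix (Fin 3) (Fin 3) ℝ)
    (hRk : Rk ∈ Matrix.specialOrthogonalGroup (Fin 3) ℝ)
    (Φ11 Φ12 Φ51 Φ52 Φ53 Φ54 : Matrix (Fin 3) (Fin 3) ℝ)
    (q g v1 p1 pk pf pa1 pa2 ζ : Fin 3 → ℝ)
    (k : ℕ) (δ : ℝ)
    (hΦ11 : Φ11 * R1 = Rk)
    (hΦ51 : Φ51 *ᵥ (R1 *ᵥ g) =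
      crossProduct (p1 + (((k : ℝ) - 1) * δ) • v1
        - ((((k : ℝ) - 1) * δ) ^ 2 / 2) • g - pk) g)
    (hΦ53 : Φ53 = (((k : ℝ) - 1) * δ) • (1 : Matrix (Fin 3) (Fin 3) ℝ)) :
    -- the ranging block row of the observability matrix applied to N₂
    let M : ℝ :=
      -- (ζ R_kᵀ⌊q×⌋Φ₁₁ − ζΦ₅₁) · (R₁ g)
      (ζ ⬝ᵥ (Rkᵀ *ᵥ crossProduct q (Φ11 *ᵥ (R1 *ᵥ g)))
        - ζ ⬝ᵥ (Φ51 *ᵥ (R1 *ᵥ g)))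
      -- (ζ R_kᵀ⌊q×⌋Φ₁₂ − ζΦ₅₂) · 0
      + (ζ ⬝ᵥ (Rkᵀ *ᵥ crossProduct q (Φ12 *ᵥ (0 : Fin 3 → ℝ)))
        - ζ ⬝ᵥ (Φ52 *ᵥ (0 : Fin 3 → ℝ)))
      -- (−ζΦ₅₃) · (−⌊v₁×⌋ g)
      + (-(ζ ⬝ᵥ (Φ53 *ᵥ (-(crossProduct v1 g)))))
      -- (−ζΦ₅₄) · 0
      + (-(ζ ⬝ᵥ (Φ54 *ᵥ (0 : Fin 3 → ℝ))))
      -- (−ζ) · (−⌊p₁×⌋ g)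
      + (-(ζ ⬝ᵥ (-(crossProduct p1 g))))
      -- 0 · (−⌊p_f×⌋ g)
      + ((0 : Fin 3 → ℝ) ⬝ᵥ (-(crossProduct pf g)))
      -- ζ · (−⌊p_{a1}×⌋ g)
      + (ζ ⬝ᵥ (-(crossProduct pa1 g)))
      -- 0 · (−⌊p_{a2}×⌋ g)
      + ((0 : Fin 3 → ℝ) ⬝ᵥ (-(crossProduct pa2 g)))
    M = ζ ⬝ᵥ crossProduct (Rkᵀ *ᵥ q + pk - pa1) g ∧
      (ζ = (-(2 : ℝ)) • (Rkᵀ *ᵥ q + pk - pa1) → M = 0) := by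
  intro M
  have hΦ11_g : Φ11 *ᵥ (R1 *ᵥ g) = Rk *ᵥ g := by rw [mulVec_mulVec, hΦ11]
  have hM : M = ζ ⬝ᵥ crossProduct (Rkᵀ *ᵥ q + pk - pa1) g := by
    simp only [M, hΦ11_g, transpose_mulVec_cross_mulVec_of_mem_specialOrthogonalGroup hRk,
      hΦ51, hΦ53, mulVec_zero, map_zero, dotProduct_zero, zero_dotProduct, smul_mulVec,
      one_mulVec, mulVec_neg, dotProduct_neg, neg_neg, map_add, map_sub, map_smul,
      LinearMap.add_apply, LinearMap.sub_apply, LinearMap.smul_apply, cross_self, smul_zero,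
      sub_zero, dotProduct_add, dotProduct_sub, dotProduct_smul, smul_eq_mul]
    ring
  refine ⟨hM, fun hζ => ?_⟩
  rw [hM, hζ, smul_dotProduct, dot_self_cross, smul_zero]

/-- Core computation of Theorem 1 (ideal observability of VIRO).
With the ideal null-space direction
`N₂ = (R₁ g, 0, −⌊v₁×⌋g, 0, −⌊p₁×⌋g, −⌊p_f×⌋g, −⌊p_{a1}×⌋g, −⌊p_{a2}×⌋g)`,
state-transition identities `Φ₁₁ R₁ = R_k`, `Φ₅₃ = (k−1)δ I` and
`Φ₅₁ R₁ g = ⌊p₁ + (k−1)δ v₁ − ((k−1)δ)²/2 g − p_k ×⌋ g`, the ranging block row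
`[ζ R_kᵀ⌊q×⌋Φ₁₁ − ζΦ₅₁, ζ R_kᵀ⌊q×⌋Φ₁₂ − ζΦ₅₂, −ζΦ₅₃, −ζΦ₅₄, −ζ, 0, ζ, 0]`
applied to `N₂` evaluates to `ζ ⌊(R_kᵀ q + p_k − p_{a1})×⌋ g`, which is zero when
`ζ = −2(R_kᵀ q + p_k − p_{a1})ᵀ`. -/
theorem stmt14
    (R1 Rk : Matrix (Fin 3) (Fin 3) ℝ)
    (hR1 : R1 ∈ Matrix.specialOrthogonalGroup (Fin 3) ℝ)
    (hRk : Rk ∈ Matrix.specialOrthogonalGroup (Fin 3) ℝ)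
    (Φ11 Φ12 Φ51 Φ52 Φ53 Φ54 : Matrix (Fin 3) (Fin 3) ℝ)
    (q g v1 p1 pk pf pa1 pa2 ζ : Fin 3 → ℝ)
    (k : ℕ) (δ : ℝ)
    (hΦ11 : Φ11 * R1 = Rk)
    (hΦ51 : Φ51 *ᵥ (R1 *ᵥ g) =
      crossProduct (p1 + (((k : ℝ) - 1) * δ) • v1
        - ((((k : ℝ) - 1) * δ) ^ 2 / 2) • g - pk) g)
    (hΦ53 : Φ53 = (((k : ℝ) - 1) * δ) • (1 : Matrix (Fin 3) (Fin 3) ℝ)) :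
    -- the ranging block row of the observability matrix applied to N₂
    let M : ℝ :=
      -- (ζ R_kᵀ⌊q×⌋Φ₁₁ − ζΦ₅₁) · (R₁ g)
      (ζ ⬝ᵥ (Rkᵀ *ᵥ crossProduct q (Φ11 *ᵥ (R1 *ᵥ g)))
        - ζ ⬝ᵥ (Φ51 *ᵥ (R1 *ᵥ g)))
      -- (ζ R_kᵀ⌊q×⌋Φ₁₂ − ζΦ₅₂) · 0
      + (ζ ⬝ᵥ (Rkᵀ *ᵥ crossProduct q (Φ12 *ᵥ (0 : Fin 3 → ℝ)))
        - ζ ⬝ᵥ (Φ52 *ᵥ (0 : Fin 3 → ℝ)))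
      -- (−ζΦ₅₃) · (−⌊v₁×⌋ g)
      + (-(ζ ⬝ᵥ (Φ53 *ᵥ (-(crossProduct v1 g)))))
      -- (−ζΦ₅₄) · 0
      + (-(ζ ⬝ᵥ (Φ54 *ᵥ (0 : Fin 3 → ℝ))))
      -- (−ζ) · (−⌊p₁×⌋ g)
      + (-(ζ ⬝ᵥ (-(crossProduct p1 g))))
      -- 0 · (−⌊p_f×⌋ g)
      + ((0 : Fin 3 → ℝ) ⬝ᵥ (-(crossProduct pf g)))
      -- ζ · (−⌊p_{a1}×⌋ g)
      + (ζ ⬝ᵥ (-(crossProduct pa1 g)))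
      -- 0 · (−⌊p_{a2}×⌋ g)
      + ((0 : Fin 3 → ℝ) ⬝ᵥ (-(crossProduct pa2 g)))
    M = ζ ⬝ᵥ crossProduct (Rkᵀ *ᵥ q + pk - pa1) g ∧
      (ζ = (-(2 : ℝ)) • (Rkᵀ *ᵥ q + pk - pa1) → M = 0) :=
  stmt14_general R1 Rk hRk Φ11 Φ12 Φ51 Φ52 Φ53 Φ54 q g v1 p1 pk pf pa1 pa2 ζ k δ hΦ11 hΦ51 hΦ53
end

section
/- The set of transformations acting on the VIRO state by (R, p_I, v, p_f, p_{a1}, p_{a2}) ↦ (R R_z^T, R_z p_I + t, R_z v, R_z p_f + t, R_z p_{a1} + t, R_z p_{a2} + t), where R_z is any rotation about the gravity axis g and t ∈ R^3, leaves all camera reprojection measurements, robot-to-anchor ranging measurements, and anchor-to-anchor ranging measurements invariant. -/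
/-! Every measurement depends on positions only through differences, where the translation `t`
cancels, and the rotation `R_z` enters either as `R_zᵀ R_z = 1` (camera) or as an isometry of the
Euclidean norm (ranging). -/

open Matrix

/-- Euclidean norm on `ℝ³`. -/
noncomputable def nrm (v : Fin 3 → ℝ) : ℝ := Real.sqrt (v ⬝ᵥ v)

section Gauge

variable {n α : Type*} [Fintype n] [CommRing α]

lemma dotProduct_mulVec_mulVec_of_mem_orthogonalGroup [DecidableEq n] {A : Matrix n n α}
    (hA : A ∈ orthogonalGroup n α) (v w : n → α) :
    (A *ᵥ v) ⬝ᵥ (A *ᵥ w) = v ⬝ᵥ w := by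
  rw [dotProduct_mulVec, ← vecMul_transpose, vecMul_vecMul, (mem_orthogonalGroup_iff' n α).mp hA,
    vecMul_one]

lemma mulVec_add_sub_mulVec_add {m : Type*} (A : Matrix m n α) (x y : n → α) (t : m → α) :
    (A *ᵥ x + t) - (A *ᵥ y + t) = A *ᵥ (x - y) := by
  rw [add_sub_add_right_eq_sub, mulVec_sub]

lemma reprojection_gauge_invariant [DecidableEq n] {m β : Type*} [Fintype m] {A : Matrix n n α}
    (hA : A ∈ orthogonalGroup n α) (C : Matrix m n α) (B : Matrix n n α) (t pI pf : n → α)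
    (pC : m → α) (π : (m → α) → β) :
    π ((C * (B * Aᵀ)) *ᵥ ((A *ᵥ pf + t) - (A *ᵥ pI + t)) + pC) = π ((C * B) *ᵥ (pf - pI) + pC) := by
  rw [mulVec_add_sub_mulVec_add, mulVec_mulVec, Matrix.mul_assoc, Matrix.mul_assoc,
    (mem_orthogonalGroup_iff' n α).mp hA, mul_one]

lemma robotAnchor_displacement_gauge (A B : Matrix n n α) (t pI q pa : n → α) :
    (A *ᵥ pI + t) + (B * Aᵀ)ᵀ *ᵥ q - (A *ᵥ pa + t) = A *ᵥ (pI + Bᵀ *ᵥ q - pa) := by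
  rw [transpose_mul, transpose_transpose, ← mulVec_mulVec, mulVec_sub, mulVec_add]
  abel

end Gauge

lemma nrm_mulVec_of_mem_orthogonalGroup {A : Matrix (Fin 3) (Fin 3) ℝ}
    (hA : A ∈ orthogonalGroup (Fin 3) ℝ) (v : Fin 3 → ℝ) : nrm (A *ᵥ v) = nrm v := by
  rw [nrm, nrm, dotProduct_mulVec_mulVec_of_mem_orthogonalGroup hA]

theorem stmt17_general (t pI pf pa1 pa2 q pCI : Fin 3 → ℝ) (bias : ℝ)
    (R RC Rz : Matrix (Fin 3) (Fin 3) ℝ)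
    (hRz : Rz ∈ Matrix.specialOrthogonalGroup (Fin 3) ℝ)
    (π : (Fin 3 → ℝ) → (Fin 2 → ℝ)) :
    -- camera reprojection measurement invariance
    π ((RC * (R * Rzᵀ)) *ᵥ ((Rz *ᵥ pf + t) - (Rz *ᵥ pI + t)) + pCI)
      = π ((RC * R) *ᵥ (pf - pI) + pCI) ∧
    -- robot-to-anchor ranging measurement invariance
    (∀ pa : Fin 3 → ℝ,
      nrm ((Rz *ᵥ pI + t) + (R * Rzᵀ)ᵀ *ᵥ q - (Rz *ᵥ pa + t)) + bias
        = nrm (pI + Rᵀ *ᵥ q - pa) + bias) ∧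
    -- anchor-to-anchor ranging measurement invariance
    nrm ((Rz *ᵥ pa1 + t) - (Rz *ᵥ pa2 + t)) + bias = nrm (pa1 - pa2) + bias := by
  have hO : Rz ∈ orthogonalGroup (Fin 3) ℝ := (mem_specialOrthogonalGroup_iff.mp hRz).1
  refine ⟨reprojection_gauge_invariant hO RC R t pI pf pCI π, fun pa => ?_, ?_⟩
  · rw [robotAnchor_displacement_gauge, nrm_mulVec_of_mem_orthogonalGroup hO]
  · rw [mulVec_add_sub_mulVec_add, nrm_mulVec_of_mem_orthogonalGroup hO]

/-- The gauge transformation `(R, p_I, p_f, p_a) ↦ (R R_zᵀ, R_z p_I + t, R_z p_f + t,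
R_z p_a + t)` with `R_z ∈ SO(3)`, `R_z g = g` a rotation about gravity and `t ∈ ℝ³`,
leaves all camera reprojection measurements, robot-to-anchor ranging measurements, and
anchor-to-anchor ranging measurements invariant. -/
theorem stmt17 (g t pI pf pa1 pa2 q pCI : Fin 3 → ℝ) (bias : ℝ)
    (R RC Rz : Matrix (Fin 3) (Fin 3) ℝ)
    (hR : R ∈ Matrix.specialOrthogonalGroup (Fin 3) ℝ)
    (hRz : Rz ∈ Matrix.specialOrthogonalGroup (Fin 3) ℝ)
    (hg : Rz *ᵥ g = g)
    (π : (Fin 3 → ℝ) → (Fin 2 → ℝ)) :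
    -- camera reprojection measurement invariance
    π ((RC * (R * Rzᵀ)) *ᵥ ((Rz *ᵥ pf + t) - (Rz *ᵥ pI + t)) + pCI)
      = π ((RC * R) *ᵥ (pf - pI) + pCI) ∧
    -- robot-to-anchor ranging measurement invariance
    (∀ pa : Fin 3 → ℝ,
      nrm ((Rz *ᵥ pI + t) + (R * Rzᵀ)ᵀ *ᵥ q - (Rz *ᵥ pa + t)) + bias
        = nrm (pI + Rᵀ *ᵥ q - pa) + bias) ∧
    -- anchor-to-anchor ranging measurement invariance
    nrm ((Rz *ᵥ pa1 + t) - (Rz *ᵥ pa2 + t)) + bias = nrm (pa1 - pa2) + bias :=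
  stmt17_general t pI pf pa1 pa2 q pCI bias R RC Rz hRz π
end

section
/- The derivative at identity of the yaw-gauge orbit through the state (R₁, v₁, p₁, p_f, p_{a1}, p_{a2}), parameterized by rotation angle θ about g and translation t, spans exactly the 4-dimensional subspace given by the columns of N_o in Theorem 1: three translation columns (0,0,I,I,I,I blocks on the position-type states) and the column (R₁ g, −⌊v₁×⌋g, −⌊p₁×⌋g, −⌊p_f×⌋g, −⌊p_{a1}×⌋g, −⌊p_{a2}×⌋g). -/
/-!
For a unit vector `b`, the matrix `B = ⌊b×⌋` satisfies `B³ = -B`, whence Rodrigues' formula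
`exp (t B) = 1 + sin t • B + (1 - cos t) • B²`; all derivatives are read off from it.
With `b = g / ‖g‖`, the orbit of a vector `v` has velocity `b × v`. The defining relation of `η`
says `exp ⌊η θ×⌋ = R₁ Rz(θ) R₁ᵀ = exp (θ ⌊R₁ b×⌋)`. Since `η 0` may be any multiple of `2π`
along an axis, the chain rule at `η 0` is useless; instead: for `0 < |θ| < π` the rotation fixes
only its axis, and `η θ × R₁ b` is fixed (as `⌊η θ×⌋` commutes with its exponential), so
`η θ = λ θ • R₁ b` near `0` (at `θ = 0` by continuity). Comparing angles, `sin (λ θ) = sin θ`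
and `cos (λ 0) = 1`, hence `λ' 0 = 1` and `η' 0 = R₁ b`. The tangent map
`(a, t) ↦ a • N₂ / ‖g‖ + (0, 0, t, t, t, t)` is then injective because `R₁ g ≠ 0`.
-/

open Matrix

/-- Cross-product (skew-symmetric) matrix `⌊v×⌋`. -/
def cmat (v : Fin 3 → ℝ) : Matrix (Fin 3) (Fin 3) ℝ :=
  !![0, -v 2, v 1; v 2, 0, -v 0; -v 1, v 0, 0]

/-- Error-state space of the VIRO state `(δθ, ṽ, p̃, p̃_f, p̃_{a1}, p̃_{a2})`. -/
abbrev ErrState :=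
  (Fin 3 → ℝ) × (Fin 3 → ℝ) × (Fin 3 → ℝ) × (Fin 3 → ℝ) × (Fin 3 → ℝ) × (Fin 3 → ℝ)

open NormedSpace Filter Topology

theorem exp_smul_eq_of_pow_three_eq_neg {𝔸 : Type*} [NormedRing 𝔸] [NormedAlgebra ℝ 𝔸]
    [CompleteSpace 𝔸] {B : 𝔸} (hB : B ^ 3 = -B) (t : ℝ) :
    exp (t • B) = 1 + Real.sin t • B + (1 - Real.cos t) • B ^ 2 := by
  let r : ℝ → 𝔸 := fun s => 1 + Real.sin s • B + (1 - Real.cos s) • B ^ 2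
  have hr : ∀ s, HasDerivAt r (B * r s) s := by
    intro s
    have h := (((Real.hasDerivAt_sin s).smul_const B).const_add 1).add
      (((Real.hasDerivAt_cos s).const_sub 1).smul_const (B ^ 2))
    refine h.congr_deriv ?_
    have hB' : B * B ^ 2 = -B := by rw [← pow_succ']; exact hB
    simp only [r, mul_add, mul_one, mul_smul_comm, ← sq, hB']
    module
  have hderiv : ∀ s, HasDerivAt (fun s => exp (s • -B) * r s) 0 s := by
    intro s
    refine ((hasDerivAt_exp_smul_const' (-B) s).mul (hr s)).congr_deriv ?_
    rw [((Commute.refl (-B)).smul_right s).exp_right.eq]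
    noncomm_ring
  have hconst : exp (t • -B) * r t = 1 := by
    simpa [r] using is_const_of_deriv_eq_zero (fun s => (hderiv s).differentiableAt)
      (fun s => (hderiv s).deriv) t 0
  have hinv : exp (t • B) * exp (t • -B) = 1 := by
    rw [← exp_add_of_commute_of_mem_ball (𝕂 := ℝ)
      ((Commute.refl B).neg_right.smul_left t |>.smul_right t) (by simp [expSeries_radius_eq_top])
      (by simp [expSeries_radius_eq_top]), smul_neg, add_neg_cancel, exp_zero]
  calc exp (t • B) = exp (t • B) * exp (t • -B) * r t := by rw [mul_assoc, hconst, mul_one]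
    _ = r t := by rw [hinv, one_mul]

lemma cmat_mulVec (v x : Fin 3 → ℝ) : cmat v *ᵥ x = v ⨯₃ x := by
  ext i; fin_cases i <;> simp [cmat, cross_apply, mulVec, dotProduct, Fin.sum_univ_three] <;> ring

lemma cmat_smul (a : ℝ) (v : Fin 3 → ℝ) : cmat (a • v) = a • cmat v := by
  ext i j; fin_cases i <;> fin_cases j <;> simp [cmat]

lemma cmat_transpose (v : Fin 3 → ℝ) : (cmat v)ᵀ = -cmat v := by
  ext i j; fin_cases i <;> fin_cases j <;> simp [cmat]

lemma cmat_pow_three (v : Fin 3 → ℝ) : cmat v ^ 3 = -(v ⬝ᵥ v) • cmat v := by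
  ext i j
  fin_cases i <;> fin_cases j <;>
    simp [cmat, pow_succ, mul_apply, Fin.sum_univ_three, dotProduct] <;> ring

lemma trace_cmat_sq (v : Fin 3 → ℝ) : trace (cmat v ^ 2) = -2 * (v ⬝ᵥ v) := by
  simp [cmat, sq, trace, Fin.sum_univ_three, dotProduct]
  ring

lemma dotProduct_self_inv_sqrt_smul {n : Type*} [Fintype n] {g : n → ℝ} (hg : g ≠ 0) :
    ((√(g ⬝ᵥ g))⁻¹ • g) ⬝ᵥ ((√(g ⬝ᵥ g))⁻¹ • g) = 1 := by
  have hpos : 0 < g ⬝ᵥ g := lt_of_le_of_ne (Finset.sum_nonneg fun i _ => mul_self_nonneg (g i))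
    (Ne.symm (dotProduct_self_eq_zero.not.mpr hg))
  rw [smul_dotProduct, dotProduct_smul, smul_eq_mul, smul_eq_mul, ← mul_assoc, ← sq, inv_pow,
    Real.sq_sqrt hpos.le, inv_mul_cancel₀ hpos.ne']

lemma dotProduct_mulVec_mulVec_of_mem_orthogonalGroup_s19 {n : Type*} [Fintype n] [DecidableEq n]
    {R : Matrix n n ℝ} (hR : R ∈ orthogonalGroup n ℝ) (u v : n → ℝ) :
    (R *ᵥ u) ⬝ᵥ (R *ᵥ v) = u ⬝ᵥ v := by
  rw [dotProduct_mulVec, ← mulVec_transpose, mulVec_mulVec, (mem_orthogonalGroup_iff' _ _).mp hR,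
    one_mulVec]

lemma det_mulVec_rows (R : Matrix (Fin 3) (Fin 3) ℝ) (u v w : Fin 3 → ℝ) :
    det ![R *ᵥ u, R *ᵥ v, R *ᵥ w] = det R * det ![u, v, w] := by
  have h : of ![R *ᵥ u, R *ᵥ v, R *ᵥ w] = of ![u, v, w] * Rᵀ := by
    ext i j; fin_cases i <;> simp [mul_apply, mulVec, dotProduct, mul_comm]
  change det (of ![R *ᵥ u, R *ᵥ v, R *ᵥ w]) = det R * det (of ![u, v, w])
  rw [h, det_mul, det_transpose, mul_comm]

lemma mulVec_cross_mulVec {R : Matrix (Fin 3) (Fin 3) ℝ}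
    (hR : R ∈ specialOrthogonalGroup (Fin 3) ℝ) (u v : Fin 3 → ℝ) :
    (R *ᵥ u) ⨯₃ (R *ᵥ v) = R *ᵥ (u ⨯₃ v) := by
  obtain ⟨hRo, hdet⟩ := mem_specialOrthogonalGroup_iff.mp hR
  have hRRt : R * Rᵀ = 1 := (mem_orthogonalGroup_iff _ _).mp hRo
  refine dotProduct_eq _ _ fun w => ?_
  -- both sides are triple products with `w`, and `det R = 1`
  have hw : w = R *ᵥ (Rᵀ *ᵥ w) := by rw [mulVec_mulVec, hRRt, one_mulVec]
  rw [dotProduct_comm, dotProduct_comm _ w, triple_product_eq_det, dotProduct_mulVec,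
    ← mulVec_transpose, triple_product_eq_det]
  conv_lhs => rw [hw]
  rw [det_mulVec_rows, hdet, one_mul]

lemma mul_cmat_mul_transpose {R : Matrix (Fin 3) (Fin 3) ℝ}
    (hR : R ∈ specialOrthogonalGroup (Fin 3) ℝ) (v : Fin 3 → ℝ) :
    R * cmat v * Rᵀ = cmat (R *ᵥ v) := by
  have hRRt : R * Rᵀ = 1 :=
    (mem_orthogonalGroup_iff _ _).mp (mem_specialOrthogonalGroup_iff.mp hR).1
  refine ext_iff_mulVec.mpr fun x => ?_
  conv_rhs => rw [← one_mulVec x, ← hRRt, ← mulVec_mulVec]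
  rw [← mulVec_mulVec, ← mulVec_mulVec, cmat_mulVec, cmat_mulVec, mulVec_cross_mulVec hR]

section UnitAxis

variable {b : Fin 3 → ℝ} (hb : b ⬝ᵥ b = 1)
include hb

theorem exp_smul_cmat (t : ℝ) :
    exp (t • cmat b) = 1 + Real.sin t • cmat b + (1 - Real.cos t) • cmat b ^ 2 := by
  -- `exp` only sees the topology, so any Banach-algebra norm on matrices will do
  let _ : NormedRing (Matrix (Fin 3) (Fin 3) ℝ) := Matrix.linftyOpNormedRing
  let _ : NormedAlgebra ℝ (Matrix (Fin 3) (Fin 3) ℝ) := Matrix.linftyOpNormedAlgebra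
  exact exp_smul_eq_of_pow_three_eq_neg (by rw [cmat_pow_three, hb, neg_one_smul]) t

theorem exp_smul_cmat_mulVec (t : ℝ) (v : Fin 3 → ℝ) :
    exp (t • cmat b) *ᵥ v = v + Real.sin t • b ⨯₃ v + (1 - Real.cos t) • b ⨯₃ (b ⨯₃ v) := by
  rw [exp_smul_cmat hb, sq, add_mulVec, add_mulVec, smul_mulVec, smul_mulVec, ← mulVec_mulVec,
    one_mulVec, cmat_mulVec, cmat_mulVec]

theorem hasDerivAt_exp_smul_cmat_mulVec (v : Fin 3 → ℝ) :
    HasDerivAt (fun t : ℝ => exp (t • cmat b) *ᵥ v) (b ⨯₃ v) 0 := by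
  have h := (((Real.hasDerivAt_sin 0).smul_const (b ⨯₃ v)).const_add v).add
    (((Real.hasDerivAt_cos 0).const_sub 1).smul_const (b ⨯₃ (b ⨯₃ v)))
  simp only [Real.cos_zero, Real.sin_zero, one_smul, neg_zero, zero_smul, add_zero] at h
  simp_rw [exp_smul_cmat_mulVec hb]
  exact h

theorem cos_eq_one_of_exp_smul_cmat_eq_one {t : ℝ} (h : exp (t • cmat b) = 1) :
    Real.cos t = 1 := by
  have htr := congrArg trace (exp_smul_cmat hb t)
  rw [h, trace_add, trace_add, trace_smul, trace_smul, trace_cmat_sq, hb] at htr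
  have : trace (cmat b) = 0 := by simp [cmat, trace, Fin.sum_univ_three]
  simp only [trace_one, Fintype.card_fin, this, smul_eq_mul, mul_zero, add_zero] at htr
  linarith

theorem sin_eq_sin_of_exp_smul_cmat_eq {s t : ℝ} (h : exp (s • cmat b) = exp (t • cmat b)) :
    Real.sin s = Real.sin t := by
  have hcomm (x y : ℝ) : Commute (x • cmat b) (y • cmat b) :=
    ((Commute.refl _).smul_left x).smul_right y
  have hone : exp ((s - t) • cmat b) = 1 := by
    rw [sub_smul, sub_eq_add_neg, ← neg_smul, exp_add_of_commute _ _ (hcomm _ _), h,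
      ← exp_add_of_commute _ _ (hcomm _ _), ← add_smul, add_neg_cancel, zero_smul, exp_zero]
  have hcos := cos_eq_one_of_exp_smul_cmat_eq_one hb hone
  have hsin : Real.sin (s - t) = 0 := by nlinarith [Real.sin_sq_add_cos_sq (s - t)]
  simpa [hsin, hcos] using Real.sin_add (s - t) t

lemma cross_cross_self_left (v : Fin 3 → ℝ) : b ⨯₃ (b ⨯₃ v) = (b ⬝ᵥ v) • b - v := by
  rw [cross_cross_eq_smul_sub_smul', hb, one_smul]

theorem eq_smul_of_exp_smul_cmat_mulVec_eq {t : ℝ} (ht : Real.sin t ≠ 0) {u : Fin 3 → ℝ}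
    (h : exp (t • cmat b) *ᵥ u = u) : u = (u ⬝ᵥ b) • b := by
  have h0 : Real.sin t • b ⨯₃ u + (1 - Real.cos t) • b ⨯₃ (b ⨯₃ u) = 0 := by
    rw [exp_smul_cmat_mulVec hb, add_assoc] at h
    simpa using h
  -- pair with `b ⨯₃ u`, which is orthogonal to `b ⨯₃ (b ⨯₃ u)`
  have h1 := congrArg (fun x => (b ⨯₃ u) ⬝ᵥ x) h0
  simp only [dotProduct_add, dotProduct_smul, dot_cross_self, smul_eq_mul, mul_zero, add_zero,
    dotProduct_zero, mul_eq_zero, ht, false_or, dotProduct_self_eq_zero] at h1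
  have := cross_cross_self_left hb u
  rw [h1, LinearMap.map_zero, dotProduct_comm] at this
  exact (sub_eq_zero.mp this.symm).symm

theorem eq_smul_of_exp_cmat_eq {t : ℝ} (ht : Real.sin t ≠ 0) {w : Fin 3 → ℝ}
    (h : exp (cmat w) = exp (t • cmat b)) : w = (w ⬝ᵥ b) • b := by
  -- `w ⨯₃ b` is fixed by the rotation, since `cmat w` commutes with its exponential
  have hfix : exp (t • cmat b) *ᵥ (w ⨯₃ b) = w ⨯₃ b := by
    have hb_fix : exp (t • cmat b) *ᵥ b = b := by
      rw [exp_smul_cmat_mulVec hb, cross_self, LinearMap.map_zero]; simp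
    rw [← cmat_mulVec, mulVec_mulVec, ← h, ← (Commute.refl (cmat w)).exp_right.eq, h,
      ← mulVec_mulVec, hb_fix]
  have hcross : w ⨯₃ b = 0 := by
    rw [eq_smul_of_exp_smul_cmat_mulVec_eq hb ht hfix, dotProduct_comm, dot_cross_self, zero_smul]
  have := cross_cross_self_left hb w
  rw [← cross_anticomm w b, hcross, neg_zero, LinearMap.map_zero, dotProduct_comm] at this
  exact (sub_eq_zero.mp this.symm).symm

end UnitAxis

theorem HasDerivAt.dotProduct_const {𝕜 ι : Type*} [NontriviallyNormedField 𝕜] [Fintype ι]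
    {f : 𝕜 → ι → 𝕜} {f' : ι → 𝕜} {x : 𝕜} (hf : HasDerivAt f f' x) (v : ι → 𝕜) :
    HasDerivAt (fun y => f y ⬝ᵥ v) (f' ⬝ᵥ v) x := by
  simpa [dotProduct] using HasDerivAt.fun_sum fun i _ => (hasDerivAt_pi.mp hf i).mul_const (v i)

theorem HasDerivAt.eq_of_exp_cmat_eq {b : Fin 3 → ℝ} (hb : b ⬝ᵥ b = 1) {η : ℝ → Fin 3 → ℝ}
    {ηd : Fin 3 → ℝ} (hη : HasDerivAt η ηd 0)
    (h : ∀ θ, NormedSpace.exp (cmat (η θ)) = NormedSpace.exp (θ • cmat b)) :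
    ηd = b := by
  set l : ℝ → ℝ := fun θ => η θ ⬝ᵥ b
  have hcol : ∀ᶠ θ in 𝓝 0, η θ = l θ • b := by
    have hpunct : ∀ᶠ θ in 𝓝[≠] 0, η θ = l θ • b := by
      filter_upwards [(Real.hasDerivAt_sin 0).eventually_ne (by simp)] with θ hθ
      exact eq_smul_of_exp_cmat_eq hb (by simpa using hθ) (h θ)
    have hclosed : IsClosed {w : Fin 3 → ℝ | w = (w ⬝ᵥ b) • b} :=
      isClosed_eq continuous_id ((continuous_id.dotProduct continuous_const).smul continuous_const)
    have h0 : η 0 = l 0 • b :=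
      hclosed.mem_of_tendsto (hη.continuousAt.tendsto.mono_left nhdsWithin_le_nhds) hpunct
    rw [← nhdsNE_sup_pure, eventually_sup, eventually_pure]
    exact ⟨hpunct, h0⟩
  have hexp : ∀ᶠ θ in 𝓝 0, NormedSpace.exp (l θ • cmat b) = NormedSpace.exp (θ • cmat b) :=
    hcol.mono fun θ hθ => by rw [← cmat_smul, ← hθ, h]
  have hl : HasDerivAt l (ηd ⬝ᵥ b) 0 := hη.dotProduct_const b
  have hcos : Real.cos (l 0) = 1 := cos_eq_one_of_exp_smul_cmat_eq_one hb
    (by rw [hexp.self_of_nhds, zero_smul, NormedSpace.exp_zero])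
  have hsin : HasDerivAt (fun θ => Real.sin (l θ)) 1 0 := by
    simpa using (Real.hasDerivAt_sin 0).congr_of_eventuallyEq
      (hexp.mono fun θ hθ => sin_eq_sin_of_exp_smul_cmat_eq hb hθ)
  have hl' : ηd ⬝ᵥ b = 1 := by
    simpa [hcos] using ((Real.hasDerivAt_sin (l 0)).comp 0 hl).unique hsin
  simpa [hl'] using hη.unique ((hl.smul_const b).congr_of_eventuallyEq hcol)

theorem exp_cmat_eq_of_mul_mul_transpose_eq {R : Matrix (Fin 3) (Fin 3) ℝ}
    (hR : R ∈ specialOrthogonalGroup (Fin 3) ℝ) {w b : Fin 3 → ℝ} {θ : ℝ}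
    (h : exp (cmat w) * (R * (exp (θ • cmat b))ᵀ) = R) :
    exp (cmat w) = exp (θ • cmat (R *ᵥ b)) := by
  obtain ⟨hRo, hdet⟩ := mem_specialOrthogonalGroup_iff.mp hR
  have hRRt : R * Rᵀ = 1 := (mem_orthogonalGroup_iff _ _).mp hRo
  have hRinv : R⁻¹ = Rᵀ := inv_eq_right_inv hRRt
  have hRunit : IsUnit R := (isUnit_iff_isUnit_det R).mpr (hdet ▸ isUnit_one)
  have hQ : (exp (θ • cmat b))ᵀ * exp (θ • cmat b) = 1 := by
    rw [← exp_transpose, transpose_smul, cmat_transpose, smul_neg,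
      ← Matrix.exp_add_of_commute _ _ (Commute.refl (θ • cmat b)).neg_left, neg_add_cancel,
      exp_zero]
  calc exp (cmat w)
      = exp (cmat w) * (R * (exp (θ • cmat b))ᵀ) * (exp (θ • cmat b) * Rᵀ) := by
        rw [mul_assoc, mul_assoc, ← mul_assoc _ _ Rᵀ, hQ, one_mul, hRRt, mul_one]
    _ = exp (R * (θ • cmat b) * R⁻¹) := by
        rw [h, Matrix.exp_conj _ _ hRunit, hRinv, mul_assoc]
    _ = exp (θ • cmat (R *ᵥ b)) := by
        rw [hRinv, mul_smul_comm, smul_mul_assoc, mul_cmat_mul_transpose hR]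

def gaugeTranslation : (Fin 3 → ℝ) →ₗ[ℝ] ErrState where
  toFun t := (0, 0, t, t, t, t)
  map_add' _ _ := by simp
  map_smul' _ _ := by simp

lemma setOf_eq_range_gaugeTranslation :
    {w : ErrState | ∃ t : Fin 3 → ℝ, w = (0, 0, t, t, t, t)} = Set.range gaugeTranslation := by
  ext w
  simp [gaugeTranslation, eq_comm]

theorem LinearMap.range_coprod_toSpanSingleton_smul {K M V : Type*} [Field K] [AddCommGroup M]
    [Module K M] [AddCommGroup V] [Module K V] (T : V →ₗ[K] M) (N : M) {c : K} (hc : c ≠ 0) :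
    range ((toSpanSingleton K M (c • N)).coprod T) = Submodule.span K (insert N (Set.range T)) := by
  rw [range_coprod, range_toSpanSingleton, Submodule.span_singleton_smul_eq (IsUnit.mk0 c hc),
    Submodule.span_insert, ← coe_range, Submodule.span_eq]

lemma injective_coprod_gaugeTranslation {N : ErrState} (hN : N.1 ≠ 0) :
    Function.Injective ((LinearMap.toSpanSingleton ℝ ErrState N).coprod gaugeTranslation) := by
  rw [← LinearMap.ker_eq_bot, eq_bot_iff]
  rintro ⟨a, t⟩ h
  have ha : a = 0 := by simpa [gaugeTranslation, hN] using congrArg Prod.fst h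
  subst ha
  simpa [gaugeTranslation] using congrArg (fun x : ErrState => x.2.2.2.1) h

/-- The derivative at the identity of the yaw-and-translation gauge orbit through the
state `(R₁, v₁, p₁, p_f, p_{a1}, p_{a2})` — the orbit acting by
`(R, v, p, ·) ↦ (R R_z(θ)ᵀ, R_z(θ) v, R_z(θ) p + t, …)` with
`R_z(θ) = exp(θ ⌊g×⌋ / ‖g‖)`, and the orientation error `δθ` defined by
`exp(⌊δθ×⌋) R̂ = R` (i.e. `exp(⌊η(θ)×⌋) (R₁ R_z(θ)ᵀ) = R₁`) — spans exactly the
4-dimensional subspace given by the columns of `N_o` of Theorem 1: the three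
translation columns `(0, 0, I, I, I, I)` and the column
`(R₁ g, −⌊v₁×⌋g, −⌊p₁×⌋g, −⌊p_f×⌋g, −⌊p_{a1}×⌋g, −⌊p_{a2}×⌋g)`. -/
theorem stmt19
    (g v1 p1 pf pa1 pa2 : Fin 3 → ℝ) (hgne : g ≠ 0)
    (R1 : Matrix (Fin 3) (Fin 3) ℝ)
    (hR1 : R1 ∈ Matrix.specialOrthogonalGroup (Fin 3) ℝ)
    (Rz : ℝ → Matrix (Fin 3) (Fin 3) ℝ)
    (hRz : ∀ θ, Rz θ = NormedSpace.exp (θ • ((Real.sqrt (g ⬝ᵥ g))⁻¹ • cmat g)))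
    (η : ℝ → (Fin 3 → ℝ))
    (hη : ∀ θ, NormedSpace.exp (cmat (η θ)) * (R1 * (Rz θ)ᵀ) = R1)
    (ηd : Fin 3 → ℝ) (hηd : HasDerivAt η ηd 0) :
    let N₂ : ErrState :=
      (R1 *ᵥ g, -(crossProduct v1 g), -(crossProduct p1 g),
       -(crossProduct pf g), -(crossProduct pa1 g), -(crossProduct pa2 g))
    let Ssp : Submodule ℝ ErrState :=
      Submodule.span ℝ (insert N₂ {w : ErrState | ∃ t : Fin 3 → ℝ, w = (0, 0, t, t, t, t)})
    Set.range (fun a : ℝ × (Fin 3 → ℝ) =>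
      ((a.1 • ηd,
        a.1 • deriv (fun θ => Rz θ *ᵥ v1) 0,
        a.1 • deriv (fun θ => Rz θ *ᵥ p1) 0 + a.2,
        a.1 • deriv (fun θ => Rz θ *ᵥ pf) 0 + a.2,
        a.1 • deriv (fun θ => Rz θ *ᵥ pa1) 0 + a.2,
        a.1 • deriv (fun θ => Rz θ *ᵥ pa2) 0 + a.2) : ErrState))
      = (Ssp : Set ErrState) ∧
    Module.finrank ℝ Ssp = 4 := by
  intro N₂ Ssp
  set c := √(g ⬝ᵥ g)
  have hb : (c⁻¹ • g) ⬝ᵥ (c⁻¹ • g) = 1 := dotProduct_self_inv_sqrt_smul hgne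
  have hRb : (R1 *ᵥ (c⁻¹ • g)) ⬝ᵥ (R1 *ᵥ (c⁻¹ • g)) = 1 :=
    (dotProduct_mulVec_mulVec_of_mem_orthogonalGroup_s19
      (mem_specialOrthogonalGroup_iff.mp hR1).1 _ _).trans hb
  have hRz' (θ : ℝ) : Rz θ = exp (θ • cmat (c⁻¹ • g)) := by rw [hRz, cmat_smul]
  have hηd' : ηd = R1 *ᵥ (c⁻¹ • g) :=
    hηd.eq_of_exp_cmat_eq hRb fun θ => exp_cmat_eq_of_mul_mul_transpose_eq hR1 (hRz' θ ▸ hη θ)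
  have hder (v : Fin 3 → ℝ) : deriv (fun θ => Rz θ *ᵥ v) 0 = c⁻¹ • -(v ⨯₃ g) := by
    simp_rw [hRz', (hasDerivAt_exp_smul_cmat_mulVec hb v).deriv, cross_anticomm,
      LinearMap.map_smul₂]
  have hrange : LinearMap.range ((LinearMap.toSpanSingleton ℝ ErrState (c⁻¹ • N₂)).coprod
      gaugeTranslation) = Ssp := by
    rw [LinearMap.range_coprod_toSpanSingleton_smul _ _ (fun h => by simp [h] at hb),
      ← setOf_eq_range_gaugeTranslation]
  refine ⟨?_, ?_⟩
  · rw [← hrange, LinearMap.coe_range]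
    congr 1
    funext a
    simp [hηd', hder, gaugeTranslation, N₂, mulVec_smul]
  · have hN : (c⁻¹ • N₂).1 ≠ 0 := by
      rw [Prod.smul_fst, ← mulVec_smul]
      exact fun h => by simp [h] at hRb
    rw [← hrange, LinearMap.finrank_range_of_inj (injective_coprod_gaugeTranslation hN)]
    simp
end
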